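/- arXiv:2502.09559 — 7 statements merged into one kernel-verified Lean document; each statement's English description precedes it below -/
import Mathlib

section
/- Let a = [a_1,...,a_d] be a strictly increasing tuple of positive integers with a ≠ [1,2,...,d]. Define m(a) = max{a_j - 2j : a_j > j}. Then the maximum m(a) is attained at some index j such that either j = 1, or a_{j-1} < a_j - 1 (i.e., j is the first index of a block of consecutive entries with a_j > j). -/
/-!
Strict monotonicity forces `a_j ≥ j` (1-based), so `a ≠ [1,…,d]` makes the set of indices with
`a_j > j` nonempty and a maximiser `j` of `a_j - 2j` exists. If `j > 1` and `a_{j-1} = a_j - 1`,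
then `a_{j-1} > j - 1` as well and `a_{j-1} - 2(j-1) = (a_j - 2j) + 1`, contradicting maximality.
-/

namespace StrictIncreasingTuple

variable {d : ℕ} {a : Fin d → ℕ}

theorem val_add_one_le (ha : StrictMono a) (hpos : ∀ i, 1 ≤ a i) (i : Fin d) :
    (i : ℕ) + 1 ≤ a i := by
  obtain ⟨n, hn⟩ := i
  induction n with
  | zero => exact hpos _
  | succ n ih =>
    have hstep := ha (show (⟨n, by omega⟩ : Fin d) < ⟨n + 1, hn⟩ from Nat.lt_succ_self n)
    have hprev : n + 1 ≤ a ⟨n, by omega⟩ := ih (by omega)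
    show n + 1 + 1 ≤ _
    omega

theorem exists_val_add_one_lt (ha : StrictMono a) (hpos : ∀ i, 1 ≤ a i)
    (hne : a ≠ fun i : Fin d => (i : ℕ) + 1) : ∃ i : Fin d, (i : ℕ) + 1 < a i := by
  by_contra! h
  exact hne (funext fun i => le_antisymm (h i) (val_add_one_le ha hpos i))

theorem exists_max_excess (h : ∃ i : Fin d, (i : ℕ) + 1 < a i) :
    ∃ j : Fin d, (j : ℕ) + 1 < a j ∧ ∀ l : Fin d, (l : ℕ) + 1 < a l →
      (a l : ℤ) - 2 * ((l : ℕ) + 1) ≤ (a j : ℤ) - 2 * ((j : ℕ) + 1) := by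
  obtain ⟨j, hj, hmax⟩ := Finset.exists_max_image {l : Fin d | (l : ℕ) + 1 < a l}
    (fun l => (a l : ℤ) - 2 * ((l : ℕ) + 1)) (by simpa [Finset.filter_nonempty_iff] using h)
  exact ⟨j, by simpa using hj, fun l hl => hmax l (by simpa using hl)⟩

theorem add_one_lt_of_max_excess (ha : StrictMono a) {j : Fin d} (hj : (j : ℕ) + 1 < a j)
    (hmax : ∀ l : Fin d, (l : ℕ) + 1 < a l →
      (a l : ℤ) - 2 * ((l : ℕ) + 1) ≤ (a j : ℤ) - 2 * ((j : ℕ) + 1))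
    {l : Fin d} (hl : (l : ℕ) + 1 = j) : a l + 1 < a j := by
  by_contra! hge
  have hlt : a l < a j := ha (Fin.lt_def.2 (by omega))
  have := hmax l (by omega)
  omega

end StrictIncreasingTuple

open StrictIncreasingTuple in
-- Indices are 0-based: the entry `a j` sits at 1-based position `j + 1`.
/-- For a strictly increasing tuple `a ≠ [1,...,d]` of positive integers, the maximum
`m(a) = max {a_j - 2j : a_j > j}` is attained at an index `j` which is either the first
index, or satisfies `a_{j-1} < a_j - 1`, i.e. `j` is the first index of a maximal block
of consecutive entries with `a_j > j`. (0-based indexing: the entry at 0-based index `j`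
occupies 1-based position `j+1`.) -/
theorem stmt_4 (d : ℕ) (a : Fin d → ℕ) (ha : StrictMono a) (hpos : ∀ i, 1 ≤ a i)
    (hne : a ≠ fun (i : Fin d) => (i : ℕ) + 1) :
    ∃ j : Fin d, (j : ℕ) + 1 < a j ∧
      IsGreatest {x : ℤ | ∃ l : Fin d, (l : ℕ) + 1 < a l ∧ x = (a l : ℤ) - 2 * ((l : ℕ) + 1)}
        ((a j : ℤ) - 2 * ((j : ℕ) + 1)) ∧
      ((j : ℕ) = 0 ∨ ∀ l : Fin d, (l : ℕ) + 1 = (j : ℕ) → a l + 1 < a j) := by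
  obtain ⟨j, hj, hmax⟩ := exists_max_excess (exists_val_add_one_lt ha hpos hne)
  refine ⟨j, hj, ⟨⟨j, hj, rfl⟩, ?_⟩, Or.inr fun l hl => add_one_lt_of_max_excess ha hj hmax hl⟩
  rintro x ⟨l, hl, rfl⟩
  exact hmax l hl
end

section
/- Let step be the function on strictly increasing d-tuples of positive integers defined by step(a)_j = a_j - 1 if (j = 1 and a_1 > 1) or (j > 1 and a_j > a_{j-1} + 1), and step(a)_j = a_j otherwise. For a ≠ [1,2,...,d] with m(a) = max{a_j - 2j : a_j > j}, if step(a) ≠ [1,2,...,d] then m(step(a)) = m(a) - 1. -/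
/-- The step function: decrease by 1 each entry which is the first entry of a maximal
block of consecutive integers, provided this preserves positivity and strict increase;
i.e. `step(a)_j = a_j - 1` if (`j = 1` and `a_1 > 1`) or (`j > 1` and `a_j > a_{j-1} + 1`),
and `step(a)_j = a_j` otherwise (0-based indexing). -/
def stepFn (d : ℕ) (a : Fin d → ℕ) : Fin d → ℕ := fun j =>
  if ((j : ℕ) = 0 ∧ 1 < a j) ∨
      (0 < (j : ℕ) ∧ a ⟨(j : ℕ) - 1, Nat.lt_of_le_of_lt (Nat.sub_le _ _) j.2⟩ + 1 < a j)
  then a j - 1 else a j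

/-
The maximiser `j` of `a_j - 2j` starts a block (otherwise `j - 1` would score one more), so it
steps down and scores `M - 1`, unless `a_j = j + 1`. In that case `a_{j+1}` is
`a_j + 1` or `a_j + 2`, and either way `step(a)_{j+1} = a_j + 1` scores `M - 1`; if there is
no `j + 1`, then `a` is the identity below `j` and `step(a)` is the identity. Conversely an
entry of `step(a)` scoring `s` either stepped down from an entry scoring `s + 1`, or was not
moved and sits right after an entry of `a` scoring `s + 1`.
-/

theorem Fin.val_eq_zero_or_exists_val_add_one_eq {d : ℕ} (j : Fin d) :
    (j : ℕ) = 0 ∨ ∃ i : Fin d, (i : ℕ) + 1 = j := by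
  rcases j with ⟨_ | n, hn⟩
  · exact Or.inl rfl
  · exact Or.inr ⟨⟨n, by omega⟩, rfl⟩

theorem add_one_le_apply_of_strictMono {d : ℕ} {a : Fin d → ℕ} (ha : StrictMono a)
    (hpos : ∀ i, 1 ≤ a i) (i : Fin d) : (i : ℕ) + 1 ≤ a i := by
  obtain ⟨n, hn⟩ := i
  induction n with
  | zero => exact hpos _
  | succ n ih =>
    have hlt : a ⟨n, by omega⟩ < a ⟨n + 1, hn⟩ := ha (Fin.mk_lt_mk.2 n.lt_succ_self)
    have hle : n + 1 ≤ a ⟨n, by omega⟩ := ih _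
    exact hle.trans_lt hlt

section stepFn

variable {d : ℕ} {a : Fin d → ℕ}

theorem stepFn_of_val_eq_zero {j : Fin d} (hj : (j : ℕ) = 0) :
    stepFn d a j = if 1 < a j then a j - 1 else a j := by
  simp [stepFn, hj]

theorem stepFn_of_val_add_one_eq {i j : Fin d} (hij : (i : ℕ) + 1 = j) :
    stepFn d a j = if a i + 1 < a j then a j - 1 else a j := by
  have hpred : (⟨(j : ℕ) - 1, Nat.lt_of_le_of_lt (Nat.sub_le _ _) j.2⟩ : Fin d) = i :=
    Fin.ext (by simp only; omega)
  simp [stepFn, hpred, show (j : ℕ) ≠ 0 by omega, show 0 < (j : ℕ) by omega]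

theorem stepFn_eq_of_apply_eq (ha : StrictMono a) (hpos : ∀ i, 1 ≤ a i) {j : Fin d}
    (hj : a j = (j : ℕ) + 1) : stepFn d a j = (j : ℕ) + 1 := by
  rcases j.val_eq_zero_or_exists_val_add_one_eq with hj0 | ⟨i, hij⟩
  · rw [stepFn_of_val_eq_zero hj0, if_neg (by omega), hj]
  · have hlt : a i < a j := ha (Fin.lt_def.2 (by omega))
    have := add_one_le_apply_of_strictMono ha hpos i
    rw [stepFn_of_val_add_one_eq hij, if_neg (by omega), hj]

theorem stepFn_eq_of_forall_lt_apply_eq (ha : StrictMono a) (hpos : ∀ i, 1 ≤ a i) {j : Fin d}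
    (hlast : (j : ℕ) + 1 = d) (hsmall : ∀ k : Fin d, (k : ℕ) < j → a k = (k : ℕ) + 1)
    (hj : stepFn d a j = (j : ℕ) + 1) : stepFn d a = fun i : Fin d => (i : ℕ) + 1 := by
  funext k
  rcases Nat.lt_or_ge (k : ℕ) j with hk | hk
  · exact stepFn_eq_of_apply_eq ha hpos (hsmall k hk)
  · obtain rfl : k = j := Fin.ext (by omega)
    exact hj

variable (ha : StrictMono a) {M : ℤ}
  (hub : ∀ k : Fin d, (k : ℕ) + 1 < a k → (a k : ℤ) - 2 * ((k : ℕ) + 1) ≤ M)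
include ha hub

theorem stepFn_sub_le (k : Fin d) (hk : (k : ℕ) + 1 < stepFn d a k) :
    (stepFn d a k : ℤ) - 2 * ((k : ℕ) + 1) ≤ M - 1 := by
  rcases k.val_eq_zero_or_exists_val_add_one_eq with hk0 | ⟨i, hik⟩
  · rw [stepFn_of_val_eq_zero hk0] at hk ⊢
    split_ifs at hk ⊢ with h
    · have := hub k (by omega)
      omega
    · omega
  · have hlt : a i < a k := ha (Fin.lt_def.2 (by omega))
    rw [stepFn_of_val_add_one_eq hik] at hk ⊢
    split_ifs at hk ⊢ with h
    · have := hub k (by omega)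
      omega
    · have := hub i (by omega)
      omega

theorem stepFn_eq_sub_one_of_eq {j : Fin d} (hj : (j : ℕ) + 1 < a j)
    (hjM : (a j : ℤ) - 2 * ((j : ℕ) + 1) = M) : stepFn d a j = a j - 1 := by
  rcases j.val_eq_zero_or_exists_val_add_one_eq with hj0 | ⟨i, hij⟩
  · rw [stepFn_of_val_eq_zero hj0, if_pos (by omega)]
  · have hlt : a i < a j := ha (Fin.lt_def.2 (by omega))
    rw [stepFn_of_val_add_one_eq hij, if_pos]
    by_contra! hgap
    have := hub i (by omega)
    omega

end stepFn

theorem stmt_6_general (d : ℕ) (a : Fin d → ℕ) (ha : StrictMono a) (hpos : ∀ i, 1 ≤ a i)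
    (hne' : stepFn d a ≠ fun i : Fin d => (i : ℕ) + 1)
    (M : ℤ)
    (hM : IsGreatest {x : ℤ | ∃ j : Fin d, (j : ℕ) + 1 < a j ∧
      x = (a j : ℤ) - 2 * ((j : ℕ) + 1)} M) :
    IsGreatest {x : ℤ | ∃ j : Fin d, (j : ℕ) + 1 < stepFn d a j ∧
      x = (stepFn d a j : ℤ) - 2 * ((j : ℕ) + 1)} (M - 1) := by
  obtain ⟨⟨j, hj, rfl⟩, hub⟩ := hM
  replace hub : ∀ k : Fin d, (k : ℕ) + 1 < a k → _ ≤ _ := fun k hk => hub ⟨k, hk, rfl⟩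
  refine ⟨?_, fun x ⟨k, hk, hx⟩ => hx ▸ stepFn_sub_le ha hub k hk⟩
  have hstep := stepFn_eq_sub_one_of_eq ha hub hj rfl
  by_cases hjbig : (j : ℕ) + 2 < a j
  · exact ⟨j, by omega, by omega⟩
  by_cases hnext : (j : ℕ) + 1 < d
  · obtain ⟨j', hj'⟩ : ∃ j' : Fin d, (j : ℕ) + 1 = j' := ⟨⟨_, hnext⟩, rfl⟩
    have hlt : a j < a j' := ha (Fin.lt_def.2 (by omega))
    have hle := hub j' (by omega)
    have hstep' : stepFn d a j' = (j : ℕ) + 3 := by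
      rw [stepFn_of_val_add_one_eq hj']
      split_ifs <;> omega
    exact ⟨j', by omega, by omega⟩
  · refine absurd (stepFn_eq_of_forall_lt_apply_eq ha hpos (j := j) (by omega) ?_ (by omega)) hne'
    intro k hk
    by_contra! hak
    have := add_one_le_apply_of_strictMono ha hpos k
    have := hub k (by omega)
    omega

/-- If `a ≠ [1,...,d]` and `step(a) ≠ [1,...,d]`, then `m(step(a)) = m(a) - 1`,
where `m(b) = max {b_j - 2j : b_j > j}` (0-based indexing, position of index `j` is `j+1`). -/
theorem stmt_6 (d : ℕ) (a : Fin d → ℕ) (ha : StrictMono a) (hpos : ∀ i, 1 ≤ a i)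
    (hne : a ≠ fun i : Fin d => (i : ℕ) + 1)
    (hne' : stepFn d a ≠ fun i : Fin d => (i : ℕ) + 1)
    (M : ℤ)
    (hM : IsGreatest {x : ℤ | ∃ j : Fin d, (j : ℕ) + 1 < a j ∧
      x = (a j : ℤ) - 2 * ((j : ℕ) + 1)} M) :
    IsGreatest {x : ℤ | ∃ j : Fin d, (j : ℕ) + 1 < stepFn d a j ∧
      x = (stepFn d a j : ℤ) - 2 * ((j : ℕ) + 1)} (M - 1) :=
  stmt_6_general d a ha hpos hne' M hM
end

section
/- Let a = [a_1,...,a_d] be a strictly increasing tuple of positive integers with a ≠ [1,2,...,d], and let τ(a) be the number of elements in the chain a = a^(1), a^(2), ..., a^(τ(a)) = [1,2,...,d] obtained by iterating the step function (which decreases by 1 each entry a_j with j=1, a_1>1, or j>1, a_j > a_{j-1}+1). Then τ(a) = m(a) + d + 1, where m(a) = max{a_j - 2j : a_j > j}. -/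
namespace StepChain

variable {d : ℕ} {a : Fin d → ℕ}

lemma val_eq_zero_or_exists_eq_succ (j : Fin d) :
    (j : ℕ) = 0 ∨ ∃ i : Fin d, (j : ℕ) = i + 1 := by
  rcases Nat.eq_zero_or_pos (j : ℕ) with h | h
  · exact .inl h
  · exact .inr ⟨⟨j - 1, by omega⟩, by simp only; omega⟩

lemma stepFn_apply_of_val_eq_zero {j : Fin d} (h : (j : ℕ) = 0) :
    stepFn d a j = if 1 < a j then a j - 1 else a j := by
  simp [stepFn, h]

lemma stepFn_apply_of_val_eq_succ {i j : Fin d} (h : (j : ℕ) = i + 1) :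
    stepFn d a j = if a i + 1 < a j then a j - 1 else a j := by
  simp [stepFn, h]

lemma stepFn_apply_le (a : Fin d → ℕ) (j : Fin d) : stepFn d a j ≤ a j := by
  unfold stepFn; split_ifs <;> omega

lemma le_stepFn_apply_add_one (a : Fin d → ℕ) (j : Fin d) : a j ≤ stepFn d a j + 1 := by
  unfold stepFn; split_ifs <;> omega

lemma val_add_one_le_of_strictMono (ha : StrictMono a) (hpos : ∀ i, 1 ≤ a i) (j : Fin d) :
    (j : ℕ) + 1 ≤ a j := by
  obtain ⟨n, hn⟩ := j
  induction n with
  | zero => exact hpos _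
  | succ n ih =>
    have hlt : a ⟨n, by omega⟩ < a ⟨n + 1, hn⟩ := ha (Fin.mk_lt_mk.2 n.lt_succ_self)
    have := ih (by omega)
    dsimp only at this ⊢
    omega

lemma strictMono_stepFn (ha : StrictMono a) : StrictMono (stepFn d a) := by
  intro i j hij
  obtain h0 | ⟨p, hp⟩ := val_eq_zero_or_exists_eq_succ j
  · rw [Fin.lt_def] at hij; omega
  have hip : a i ≤ a p := ha.monotone (by rw [Fin.le_def]; omega)
  have hpj : a p < a j := ha (by rw [Fin.lt_def]; omega)
  have := stepFn_apply_le a i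
  rw [stepFn_apply_of_val_eq_succ hp]
  split_ifs <;> omega

lemma val_add_one_le_stepFn_apply (hge : ∀ j : Fin d, (j : ℕ) + 1 ≤ a j) (j : Fin d) :
    (j : ℕ) + 1 ≤ stepFn d a j := by
  have := hge j
  obtain h0 | ⟨p, hp⟩ := val_eq_zero_or_exists_eq_succ j
  · rw [stepFn_apply_of_val_eq_zero h0]
    split_ifs <;> omega
  · have := hge p
    rw [stepFn_apply_of_val_eq_succ hp]
    split_ifs <;> omega

lemma exists_eq_succ_of_stepFn_apply_eq (ha : StrictMono a) {j : Fin d}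
    (hj : (j : ℕ) + 1 < a j) (h : stepFn d a j = a j) :
    ∃ p : Fin d, (j : ℕ) = p + 1 ∧ a p + 1 = a j := by
  obtain h0 | ⟨p, hp⟩ := val_eq_zero_or_exists_eq_succ j
  · rw [stepFn_apply_of_val_eq_zero h0] at h
    split_ifs at h <;> omega
  · have hpj : a p < a j := ha (by rw [Fin.lt_def]; omega)
    rw [stepFn_apply_of_val_eq_succ hp] at h
    split_ifs at h <;> first | omega | exact ⟨p, hp, by omega⟩

def displaced (a : Fin d → ℕ) : Finset (Fin d) := {j | (j : ℕ) + 1 < a j}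

@[simp] lemma mem_displaced {j : Fin d} : j ∈ displaced a ↔ (j : ℕ) + 1 < a j := by
  simp [displaced]

-- `m(a) + d` in 0-based indexing, with `max ∅ = 0`; the truncated subtraction never truncates
-- on `displaced a`.
def potential (a : Fin d → ℕ) : ℕ :=
  (displaced a).sup fun j => a j + d - 2 * ((j : ℕ) + 1)

lemma le_potential {j : Fin d} (hj : (j : ℕ) + 1 < a j) :
    a j + d - 2 * ((j : ℕ) + 1) ≤ potential a :=
  Finset.le_sup (f := fun j : Fin d => a j + d - 2 * ((j : ℕ) + 1)) (mem_displaced.2 hj)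

lemma potential_le {n : ℕ}
    (h : ∀ j : Fin d, (j : ℕ) + 1 < a j → a j + d - 2 * ((j : ℕ) + 1) ≤ n) :
    potential a ≤ n :=
  Finset.sup_le fun j hj => h j (mem_displaced.1 hj)

lemma exists_potential_eq (h : ∃ j : Fin d, (j : ℕ) + 1 < a j) :
    ∃ j : Fin d, (j : ℕ) + 1 < a j ∧ potential a = a j + d - 2 * ((j : ℕ) + 1) := by
  obtain ⟨j, hj⟩ := h
  obtain ⟨i, hi, hmax⟩ := Finset.exists_mem_eq_sup (displaced a) ⟨j, mem_displaced.2 hj⟩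
    fun j => a j + d - 2 * ((j : ℕ) + 1)
  exact ⟨i, mem_displaced.1 hi, hmax⟩

lemma potential_eq_zero_iff (hge : ∀ j : Fin d, (j : ℕ) + 1 ≤ a j) :
    potential a = 0 ↔ a = fun j : Fin d => (j : ℕ) + 1 := by
  constructor
  · intro h0
    funext j
    show a j = j + 1
    have := hge j
    have := j.2
    by_contra hj
    have := le_potential (a := a) (j := j) (by omega)
    omega
  · rintro rfl
    exact Nat.eq_zero_of_le_zero (potential_le fun j hj => by simp at hj)

lemma potential_stepFn_le (ha : StrictMono a) : potential (stepFn d a) ≤ potential a - 1 := by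
  refine potential_le fun j hj => ?_
  have hle := stepFn_apply_le a j
  have hdrop := le_stepFn_apply_add_one a j
  have hjd := j.2
  rcases Nat.lt_or_ge (stepFn d a j) (a j) with hmove | hstay
  · have := le_potential (a := a) (j := j) (by omega)
    omega
  · obtain ⟨p, hp, hpj⟩ := exists_eq_succ_of_stepFn_apply_eq ha (j := j) (by omega) (by omega)
    have := le_potential (a := a) (j := p) (by omega)
    omega

lemma stepFn_apply_add_one_of_potential_eq (ha : StrictMono a) {j : Fin d}
    (hj : (j : ℕ) + 1 < a j) (hmax : potential a = a j + d - 2 * ((j : ℕ) + 1)) :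
    stepFn d a j + 1 = a j := by
  by_contra hstay
  have := stepFn_apply_le a j
  have := le_stepFn_apply_add_one a j
  obtain ⟨p, hp, hpj⟩ := exists_eq_succ_of_stepFn_apply_eq ha hj (by omega)
  have := le_potential (a := a) (j := p) (by omega)
  have hjd := j.2
  omega

lemma potential_sub_one_le_potential_stepFn (ha : StrictMono a) :
    potential a - 1 ≤ potential (stepFn d a) := by
  by_cases hdisp : ∃ j : Fin d, (j : ℕ) + 1 < a j
  swap
  · have : potential a = 0 :=
      Nat.eq_zero_of_le_zero (potential_le fun j hj => (hdisp ⟨j, hj⟩).elim)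
    omega
  obtain ⟨j, hj, hmax⟩ := exists_potential_eq hdisp
  have hstep := stepFn_apply_add_one_of_potential_eq ha hj hmax
  have hjd := j.2
  by_cases hfar : (j : ℕ) + 2 < a j
  · have := le_potential (a := stepFn d a) (j := j) (by omega)
    omega
  by_cases hlast : (j : ℕ) + 1 < d
  swap
  · omega
  obtain ⟨q, hq⟩ : ∃ q : Fin d, (q : ℕ) = j + 1 := ⟨⟨_, hlast⟩, rfl⟩
  have hjq : a j < a q := ha (by rw [Fin.lt_def]; omega)
  have := le_potential (a := a) (j := q) (by omega)
  have hstepq : stepFn d a q = (j : ℕ) + 3 := by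
    rw [stepFn_apply_of_val_eq_succ hq]
    split_ifs <;> omega
  have := le_potential (a := stepFn d a) (j := q) (by omega)
  omega

lemma potential_stepFn (ha : StrictMono a) : potential (stepFn d a) = potential a - 1 :=
  le_antisymm (potential_stepFn_le ha) (potential_sub_one_le_potential_stepFn ha)

lemma iterate_stepFn_eq_iff (ha : StrictMono a) (hge : ∀ j : Fin d, (j : ℕ) + 1 ≤ a j)
    (n : ℕ) :
    (stepFn d)^[n] a = (fun j : Fin d => (j : ℕ) + 1) ↔ potential a ≤ n := by
  induction n generalizing a with
  | zero => simpa using (potential_eq_zero_iff hge).symm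
  | succ n ih =>
    rw [Function.iterate_succ_apply, ih (strictMono_stepFn ha) (val_add_one_le_stepFn_apply hge),
      potential_stepFn ha]
    omega

lemma isGreatest_potential_sub (h : ∃ j : Fin d, (j : ℕ) + 1 < a j) :
    IsGreatest
      {x : ℤ | ∃ j : Fin d, (j : ℕ) + 1 < a j ∧ x = (a j : ℤ) - 2 * ((j : ℕ) + 1)}
      ((potential a : ℤ) - d) := by
  obtain ⟨j, hj, hmax⟩ := exists_potential_eq h
  refine ⟨⟨j, hj, by omega⟩, ?_⟩
  rintro x ⟨i, hi, rfl⟩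
  have := le_potential hi
  have := i.2
  omega

end StepChain

theorem stmt_7_general (d : ℕ) (a : Fin d → ℕ) (ha : StrictMono a) (hpos : ∀ i, 1 ≤ a i)
    (M : ℤ)
    (hM : IsGreatest {x : ℤ | ∃ j : Fin d, (j : ℕ) + 1 < a j ∧
      x = (a j : ℤ) - 2 * ((j : ℕ) + 1)} M)
    (k : ℕ) (hk : (stepFn d)^[k] a = fun i : Fin d => (i : ℕ) + 1)
    (hmin : ∀ l, (stepFn d)^[l] a = (fun i : Fin d => (i : ℕ) + 1) → k ≤ l) :
    (k : ℤ) + 1 = M + d + 1 := by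
  have hge := StepChain.val_add_one_le_of_strictMono ha hpos
  have hreach := StepChain.iterate_stepFn_eq_iff ha hge
  have hk_eq : k = StepChain.potential a :=
    le_antisymm (hmin _ ((hreach _).2 le_rfl)) ((hreach k).1 hk)
  obtain ⟨j, hj, -⟩ := hM.1
  have hM_eq : M = StepChain.potential a - d :=
    hM.unique (StepChain.isGreatest_potential_sub ⟨j, hj⟩)
  omega

/-- `τ(a) = m(a) + d + 1`: the chain obtained by iterating the step function from `a`
down to `[1,...,d]` has `k + 1` elements, where `k` is the minimal number of iterations
needed, and `k + 1 = m(a) + d + 1` with `m(a) = max {a_j - 2j : a_j > j}`. -/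
theorem stmt_7 (d : ℕ) (a : Fin d → ℕ) (ha : StrictMono a) (hpos : ∀ i, 1 ≤ a i)
    (hne : a ≠ fun i : Fin d => (i : ℕ) + 1)
    (M : ℤ)
    (hM : IsGreatest {x : ℤ | ∃ j : Fin d, (j : ℕ) + 1 < a j ∧
      x = (a j : ℤ) - 2 * ((j : ℕ) + 1)} M)
    (k : ℕ) (hk : (stepFn d)^[k] a = fun i : Fin d => (i : ℕ) + 1)
    (hmin : ∀ l, (stepFn d)^[l] a = (fun i : Fin d => (i : ℕ) + 1) → k ≤ l) :
    (k : ℤ) + 1 = M + d + 1 :=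
  stmt_7_general d a ha hpos M hM k hk hmin
end

section
/- Let γ = [a_1,...,a_d] with 1 ≤ a_1 < ... < a_d ≤ n, γ ≠ [n-d+1,...,n], with block decomposition γ = [β_0,...,β_s] and gaps χ_0,...,χ_t (t = s if a_d < n, t = s-1 if a_d = n). Define κ_i = Σ_{j=0}^{i}|β_j| + Σ_{j=i}^{t}|χ_j|. Then max{κ_i : 0 ≤ i ≤ t} = d + 1 + max{n - a_{k_{i+1}} + 1 - 2(d - k_{i+1} + 1) : 0 ≤ i ≤ t}, where k_{i+1} is the index of the last entry of block β_i. -/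
/-!
Both sums in `κ_i` telescope. The block sizes sum to `k_{i+1}`. Since a block consists of
consecutive integers, the gap after block `j` has size `g (j+1) - g j`, where
`g j = a_{k_{j+1}} - k_{j+1}` compares the last entry of block `j` with its index; so the gaps
from `χ_i` on sum to `n - a_{k_{i+1}} - (d - k_{i+1})`. Hence `κ_i` equals `d + 1` plus the
`i`-th term on the right termwise, and the two maxima agree. When `a_d = n` the final gap is
empty, so stopping at `t = s - 1` does not change the gap sums.
-/

open Finset

lemma apply_add_of_consecutive {a : ℕ → ℕ} {p q : ℕ}
    (h : ∀ j, p ≤ j → j + 1 < q → a (j + 1) = a j + 1) :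
    ∀ c, p + c < q → a (p + c) = a p + c
  | 0, _ => rfl
  | c + 1, hc => by
    rw [← add_assoc, h (p + c) (by omega) hc, apply_add_of_consecutive h c (by omega)]
    rfl

lemma apply_pred_of_consecutive {a : ℕ → ℕ} {p q : ℕ} (hpq : p < q)
    (h : ∀ j, p ≤ j → j + 1 < q → a (j + 1) = a j + 1) :
    (a (q - 1) : ℤ) = a p + q - p - 1 := by
  have := apply_add_of_consecutive h (q - 1 - p) (by omega)
  rw [show p + (q - 1 - p) = q - 1 by omega] at this
  omega

section Blocks

variable {n d s : ℕ} {a k : ℕ → ℕ} {χ : ℕ → ℤ}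

lemma gap_eq_sub_of_blocks (hkmono : ∀ i ≤ s, k i < k (i + 1))
    (hblock : ∀ i ≤ s, ∀ j, k i ≤ j → j + 1 < k (i + 1) → a (j + 1) = a j + 1)
    (hχ : ∀ i < s, χ i = (a (k (i + 1)) : ℤ) - (a (k (i + 1) - 1) : ℤ) - 1)
    {i : ℕ} (hi : i < s) :
    χ i = ((a (k (i + 1 + 1) - 1) : ℤ) - k (i + 1 + 1)) - ((a (k (i + 1) - 1) : ℤ) - k (i + 1)) := by
  rw [hχ i hi, apply_pred_of_consecutive (hkmono (i + 1) hi) (hblock (i + 1) hi)]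
  ring

lemma sum_Ico_gaps (hkmono : ∀ i ≤ s, k i < k (i + 1))
    (hblock : ∀ i ≤ s, ∀ j, k i ≤ j → j + 1 < k (i + 1) → a (j + 1) = a j + 1)
    (hχ : ∀ i < s, χ i = (a (k (i + 1)) : ℤ) - (a (k (i + 1) - 1) : ℤ) - 1)
    {i : ℕ} (hi : i ≤ s) :
    ∑ j ∈ Ico i s, χ j =
      ((a (k (s + 1) - 1) : ℤ) - k (s + 1)) - ((a (k (i + 1) - 1) : ℤ) - k (i + 1)) := by
  rw [sum_congr rfl fun j hj => gap_eq_sub_of_blocks hkmono hblock hχ (mem_Ico.mp hj).2]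
  exact sum_Ico_sub (fun j => (a (k (j + 1) - 1) : ℤ) - k (j + 1)) hi

lemma sum_Icc_gaps {t : ℕ} (hklast : k (s + 1) = d) (hkmono : ∀ i ≤ s, k i < k (i + 1))
    (hblock : ∀ i ≤ s, ∀ j, k i ≤ j → j + 1 < k (i + 1) → a (j + 1) = a j + 1)
    (ht : (a (d - 1) < n ∧ t = s) ∨ (a (d - 1) = n ∧ 1 ≤ s ∧ t = s - 1))
    (hχ : ∀ i < s, χ i = (a (k (i + 1)) : ℤ) - (a (k (i + 1) - 1) : ℤ) - 1)
    (hχs : χ s = (n : ℤ) - (a (d - 1) : ℤ)) {i : ℕ} (hi : i ≤ t) :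
    ∑ j ∈ Icc i t, χ j = (n : ℤ) - a (k (i + 1) - 1) - ((d : ℤ) - k (i + 1)) := by
  have hIco := sum_Ico_gaps hkmono hblock hχ (i := i) (by omega)
  rw [hklast] at hIco
  rcases ht with ⟨-, rfl⟩ | ⟨hlast, hs, rfl⟩
  · rw [← Ico_add_one_right_eq_Icc, sum_Ico_succ_top hi, hIco, hχs]
    ring
  · rw [← Ico_add_one_right_eq_Icc, Nat.sub_add_cancel hs, hIco, hlast]
    ring

end Blocks

theorem stmt_10_general (n d s t : ℕ)
    -- γ is the strictly increasing tuple `a 0 < a 1 < ... < a (d-1)` (0-based indexing)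
    (a : ℕ → ℕ)
    -- block decomposition: block `i` (0 ≤ i ≤ s) occupies the 0-based indices
    -- `k i, k i + 1, ..., k (i+1) - 1`; its entries are consecutive integers, and
    -- consecutive blocks are separated by a nonempty gap
    (k : ℕ → ℕ) (hk0 : k 0 = 0) (hklast : k (s + 1) = d)
    (hkmono : ∀ i ≤ s, k i < k (i + 1))
    (hblock : ∀ i ≤ s, ∀ j, k i ≤ j → j + 1 < k (i + 1) → a (j + 1) = a j + 1)
    -- t = s if a_d < n, and t = s - 1 if a_d = n
    (ht : (a (d - 1) < n ∧ t = s) ∨ (a (d - 1) = n ∧ 1 ≤ s ∧ t = s - 1))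
    -- gap sizes: |χ_i| for i < s, and the final gap |χ_s| = n - a_d
    (χ : ℕ → ℤ)
    (hχ : ∀ i < s, χ i = (a (k (i + 1)) : ℤ) - (a (k (i + 1) - 1) : ℤ) - 1)
    (hχs : χ s = (n : ℤ) - (a (d - 1) : ℤ))
    -- block sizes |β_i| = k (i+1) - k i
    (β : ℕ → ℤ) (hβ : ∀ i, β i = (k (i + 1) : ℤ) - (k i : ℤ))
    (κ : ℕ → ℤ)
    (hκ : ∀ i, κ i = (∑ j ∈ Finset.Icc 0 i, β j) + ∑ j ∈ Finset.Icc i t, χ j) :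
    (Finset.Icc 0 t).sup' (Finset.nonempty_Icc.mpr (Nat.zero_le t)) κ =
      (d : ℤ) + 1 + (Finset.Icc 0 t).sup' (Finset.nonempty_Icc.mpr (Nat.zero_le t))
        (fun i => (n : ℤ) - (a (k (i + 1) - 1) : ℤ) + 1 - 2 * ((d : ℤ) - (k (i + 1) : ℤ) + 1)) := by
  have hblocks : ∀ i, ∑ j ∈ Icc 0 i, β j = k (i + 1) := fun i => by
    rw [sum_congr rfl fun j _ => hβ j, sum_Icc_sub (Nat.zero_le i) (fun j => (k j : ℤ)), hk0, Nat.cast_zero, sub_zero]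
  have hterm : ∀ i ∈ Icc 0 t, κ i =
      (d : ℤ) + 1 + ((n : ℤ) - a (k (i + 1) - 1) + 1 - 2 * ((d : ℤ) - k (i + 1) + 1)) := by
    intro i hi
    rw [hκ, hblocks, sum_Icc_gaps hklast hkmono hblock ht hχ hχs (mem_Icc.mp hi).2]
    ring
  rw [sup'_congr _ rfl hterm, add_sup']

/-- `max {κ_i} = d + 1 + max {n - a_{k_{i+1}} + 1 - 2(d - k_{i+1} + 1)}` over `0 ≤ i ≤ t`,
where `κ_i = Σ_{j=0}^{i}|β_j| + Σ_{j=i}^{t}|χ_j|`. -/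
theorem stmt_10 (n d s t : ℕ) (hd : 1 ≤ d) (hdn : d ≤ n)
    -- γ is the strictly increasing tuple `a 0 < a 1 < ... < a (d-1)` (0-based indexing)
    (a : ℕ → ℕ)
    (hmono : ∀ j, j + 1 < d → a j < a (j + 1))
    (hbd : ∀ j < d, 1 ≤ a j ∧ a j ≤ n)
    -- γ ≠ [n-d+1,...,n]
    (hne : ∃ j < d, a j ≠ n - d + 1 + j)
    -- block decomposition: block `i` (0 ≤ i ≤ s) occupies the 0-based indices
    -- `k i, k i + 1, ..., k (i+1) - 1`; its entries are consecutive integers, and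
    -- consecutive blocks are separated by a nonempty gap
    (k : ℕ → ℕ) (hk0 : k 0 = 0) (hklast : k (s + 1) = d)
    (hkmono : ∀ i ≤ s, k i < k (i + 1))
    (hblock : ∀ i ≤ s, ∀ j, k i ≤ j → j + 1 < k (i + 1) → a (j + 1) = a j + 1)
    (hgap : ∀ i < s, a (k (i + 1) - 1) + 1 < a (k (i + 1)))
    -- t = s if a_d < n, and t = s - 1 if a_d = n
    (ht : (a (d - 1) < n ∧ t = s) ∨ (a (d - 1) = n ∧ 1 ≤ s ∧ t = s - 1))
    -- gap sizes: |χ_i| for i < s, and the final gap |χ_s| = n - a_d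
    (χ : ℕ → ℤ)
    (hχ : ∀ i < s, χ i = (a (k (i + 1)) : ℤ) - (a (k (i + 1) - 1) : ℤ) - 1)
    (hχs : χ s = (n : ℤ) - (a (d - 1) : ℤ))
    -- block sizes |β_i| = k (i+1) - k i
    (β : ℕ → ℤ) (hβ : ∀ i, β i = (k (i + 1) : ℤ) - (k i : ℤ))
    (κ : ℕ → ℤ)
    (hκ : ∀ i, κ i = (∑ j ∈ Finset.Icc 0 i, β j) + ∑ j ∈ Finset.Icc i t, χ j) :
    (Finset.Icc 0 t).sup' (Finset.nonempty_Icc.mpr (Nat.zero_le t)) κ =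
      (d : ℤ) + 1 + (Finset.Icc 0 t).sup' (Finset.nonempty_Icc.mpr (Nat.zero_le t))
        (fun i => (n : ℤ) - (a (k (i + 1) - 1) : ℤ) + 1 - 2 * ((d : ℤ) - (k (i + 1) : ℤ) + 1)) :=
  stmt_10_general n d s t a k hk0 hklast hkmono hblock ht χ hχ hχs β hβ κ hκ
end

section
/- Let Π be a poset, A a commutative ring, and suppose every element of A is a B-linear combination of standard monomials on Π (products of chains). Let Ω be a straightening-closed poset ideal of Π in a graded ASL A on Π over B, and I = AΩ. Then for any u ∈ ℕ, an element z ∈ A lies in I^u if and only if every standard monomial appearing in the standard representation of z has at least u factors in Ω. -/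
/-- Data of a graded algebra with straightening law (ASL) on a poset `P` over a
commutative ring `B`: an embedding of `P` into the `B`-algebra `A` such that the
standard monomials (products over weakly increasing chains in `P`) form a `B`-basis
of `A`, and for incomparable `α, β` every standard monomial appearing in the
straightening relation of `α * β` contains a factor `ζ` with `ζ ≤ α` and `ζ ≤ β`. -/
structure ASLData (P B A : Type*) [PartialOrder P] [CommRing B] [CommRing A]
    [Algebra B A] where
  emb : P → A
  basis : Module.Basis {l : List P // l.Pairwise (· ≤ ·)} B A
  basis_eq : ∀ l, basis l = (l.1.map emb).prod
  straighten : ∀ α β : P, ¬ α ≤ β → ¬ β ≤ α →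
    ∀ μ ∈ (basis.repr (emb α * emb β)).support, ∃ ζ ∈ μ.1, ζ ≤ α ∧ ζ ≤ β

/-- The number of factors of the (standard) monomial `l` lying in `Ω`. -/
noncomputable def countIn {P : Type*} (Ω : Set P) (l : List P) : ℕ :=
  l.countP fun z => @decide (z ∈ Ω) (Classical.propDecidable _)

/-!
Let `N u` (`ASLData.stdFiltration`) be the `B`-span of the standard monomials with at least `u`
factors in `Ω`. Each standard monomial with `k` factors in `Ω` lies in `I ^ k`, so
`N u ⊆ I ^ u`. Conversely, `I ^ u ⊆ N u` follows once `π * N w ⊆ N (w + [π ∈ Ω])` for every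
`π : P`, which is proved for standard monomials `ξ :: t` by induction on `u` and, for fixed `u`,
well-founded induction on `π`. If `π ≤ ξ` the product is standard; if `ξ < π` we move `π` past
`ξ`; if they are incomparable, every standard monomial in the straightening of `π * ξ` starts
with a factor strictly below `π`, and straightening-closedness guarantees it keeps at least as
many factors in `Ω` as `π * ξ`.
-/

namespace List

theorem pairwise_cons_of_le_head {P : Type*} [Preorder P] {π ξ : P} {t : List P}
    (hs : (ξ :: t).Pairwise (· ≤ ·)) (h : π ≤ ξ) : (π :: ξ :: t).Pairwise (· ≤ ·) :=
  pairwise_cons.2 ⟨fun _ hb => (mem_cons.1 hb).elim (· ▸ h)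
    fun hb => h.trans ((pairwise_cons.1 hs).1 _ hb), hs⟩

theorem exists_eq_cons_head_le {P : Type*} [Preorder P] {l : List P} {ζ : P}
    (hs : l.Pairwise (· ≤ ·)) (hζ : ζ ∈ l) : ∃ h tail, l = h :: tail ∧ h ≤ ζ := by
  obtain _ | ⟨h, tail⟩ := l
  · cases hζ
  · refine ⟨h, tail, rfl, ?_⟩
    rcases mem_cons.1 hζ with rfl | hζ
    exacts [le_rfl, (pairwise_cons.1 hs).1 _ hζ]

end List

section countIn

open scoped Classical

variable {P : Type*} (Ω : Set P)

@[simp]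
theorem countIn_nil : countIn Ω ([] : List P) = 0 := rfl

@[simp]
theorem countIn_append (l₁ l₂ : List P) :
    countIn Ω (l₁ ++ l₂) = countIn Ω l₁ + countIn Ω l₂ :=
  List.countP_append

theorem countIn_cons (x : P) (l : List P) : countIn Ω (x :: l) = countIn Ω [x] + countIn Ω l :=
  countIn_append Ω [x] l

variable {Ω}

@[simp]
theorem countIn_cons_of_mem {x : P} (hx : x ∈ Ω) (l : List P) :
    countIn Ω (x :: l) = countIn Ω l + 1 :=
  List.countP_cons_of_pos (decide_eq_true hx)

@[simp]
theorem countIn_cons_of_notMem {x : P} (hx : x ∉ Ω) (l : List P) :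
    countIn Ω (x :: l) = countIn Ω l :=
  List.countP_cons_of_neg (by simpa using hx)

theorem countIn_pos {x : P} {l : List P} (hx : x ∈ l) (hxΩ : x ∈ Ω) : 0 < countIn Ω l :=
  List.countP_pos_iff.2 ⟨x, hx, decide_eq_true hxΩ⟩

theorem countIn_eq_zero_of_head_notMem [Preorder P] (hΩ : IsLowerSet Ω) {ξ : P} {t : List P}
    (hs : (ξ :: t).Pairwise (· ≤ ·)) (hξ : ξ ∉ Ω) : countIn Ω (ξ :: t) = 0 :=
  List.countP_eq_zero.2 fun x hx hxΩ => hξ <| hΩ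
    ((List.mem_cons.1 hx).elim (·.ge) ((List.pairwise_cons.1 hs).1 x)) (of_decide_eq_true hxΩ)

end countIn

theorem Module.Basis.mul_mem_of_forall_mem_support {ι B A : Type*} [CommRing B] [Ring A]
    [Algebra B A] (b : Basis ι B A) {N : Submodule B A} {z c : A}
    (h : ∀ i ∈ (b.repr z).support, b i * c ∈ N) : z * c ∈ N := by
  rw [← b.linearCombination_repr z, Finsupp.linearCombination_apply, Finsupp.sum, Finset.sum_mul]
  exact N.sum_mem fun i hi => smul_mul_assoc (b.repr z i) (b i) c ▸ N.smul_mem _ (h i hi)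

namespace ASLData

variable {P B A : Type*} [PartialOrder P] [CommRing B] [CommRing A] [Algebra B A]
  (D : ASLData P B A) (Ω : Set P)

def IsStraighteningClosed : Prop :=
  ∀ δ ∈ Ω, ∀ τ ∈ Ω, ¬ δ ≤ τ → ¬ τ ≤ δ →
    ∀ μ ∈ (D.basis.repr (D.emb δ * D.emb τ)).support, 2 ≤ countIn Ω μ.1

def monomial (m : List P) : A := (m.map D.emb).prod

@[simp]
theorem monomial_nil : D.monomial [] = 1 := List.prod_nil

@[simp]
theorem monomial_cons (x : P) (m : List P) : D.monomial (x :: m) = D.emb x * D.monomial m :=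
  List.prod_cons

@[simp]
theorem monomial_append (m₁ m₂ : List P) :
    D.monomial (m₁ ++ m₂) = D.monomial m₁ * D.monomial m₂ := by
  simp [monomial]

theorem basis_eq_monomial (μ : {l : List P // l.Pairwise (· ≤ ·)}) :
    D.basis μ = D.monomial μ.1 :=
  D.basis_eq μ

theorem monomial_mem_span_pow (m : List P) :
    D.monomial m ∈ Ideal.span (D.emb '' Ω) ^ countIn Ω m := by
  induction m with
  | nil => simp
  | cons x m ih =>
    by_cases hx : x ∈ Ω
    · rw [monomial_cons, countIn_cons_of_mem hx, pow_succ']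
      exact Ideal.mul_mem_mul (Ideal.subset_span ⟨x, hx, rfl⟩) ih
    · rw [monomial_cons, countIn_cons_of_notMem hx]
      exact Ideal.mul_mem_left _ _ ih

def stdFiltration (u : ℕ) : Submodule B A :=
  Submodule.span B (D.basis '' {μ | u ≤ countIn Ω μ.1})

def MulMemStdFiltration (u : ℕ) (π : P) : Prop :=
  ∀ m : List P, m.Pairwise (· ≤ ·) → u ≤ countIn Ω (π :: m) →
    D.emb π * D.monomial m ∈ D.stdFiltration Ω u

variable {D Ω}

theorem mem_stdFiltration_iff {u : ℕ} {z : A} :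
    z ∈ D.stdFiltration Ω u ↔ ∀ μ ∈ (D.basis.repr z).support, u ≤ countIn Ω μ.1 :=
  D.basis.mem_span_image

theorem mem_stdFiltration_zero (z : A) : z ∈ D.stdFiltration Ω 0 :=
  mem_stdFiltration_iff.2 fun _ _ => Nat.zero_le _

theorem monomial_mem_stdFiltration {m : List P} (hs : m.Pairwise (· ≤ ·)) {u : ℕ}
    (hu : u ≤ countIn Ω m) : D.monomial m ∈ D.stdFiltration Ω u :=
  D.basis_eq_monomial ⟨m, hs⟩ ▸ Submodule.subset_span ⟨⟨m, hs⟩, hu, rfl⟩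

theorem mem_span_pow_of_mem_stdFiltration {u : ℕ} {z : A} (hz : z ∈ D.stdFiltration Ω u) :
    z ∈ Ideal.span (D.emb '' Ω) ^ u := by
  have : D.stdFiltration Ω u ≤ (Ideal.span (D.emb '' Ω) ^ u).restrictScalars B := by
    refine Submodule.span_le.2 ?_
    rintro _ ⟨μ, hμ, rfl⟩
    rw [basis_eq_monomial]
    exact Ideal.pow_le_pow_right hμ (D.monomial_mem_span_pow Ω μ.1)
  exact this hz

theorem MulMemStdFiltration.emb_mul_mem {v w : ℕ} {π : P} (hπ : D.MulMemStdFiltration Ω v π)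
    (hv : v ≤ w + countIn Ω [π]) {z : A} (hz : z ∈ D.stdFiltration Ω w) :
    D.emb π * z ∈ D.stdFiltration Ω v := by
  rw [mul_comm]
  refine D.basis.mul_mem_of_forall_mem_support fun μ hμ => ?_
  rw [mul_comm, basis_eq_monomial]
  refine hπ μ.1 μ.2 ?_
  have := mem_stdFiltration_iff.1 hz μ hμ
  rw [countIn_cons]
  omega

theorem monomial_mem_stdFiltration_of_forall {u : ℕ}
    (hQ : ∀ v ≤ u, ∀ π, D.MulMemStdFiltration Ω v π) (l : List P) (hu : u ≤ countIn Ω l) :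
    D.monomial l ∈ D.stdFiltration Ω u := by
  induction l generalizing u with
  | nil =>
    obtain rfl : u = 0 := by simpa using hu
    exact mem_stdFiltration_zero _
  | cons x l ih =>
    rw [countIn_cons] at hu
    have hl := ih (u := u - countIn Ω [x]) (fun v hv => hQ v (by omega)) (by omega)
    exact (hQ u le_rfl x).emb_mul_mem (by omega) hl

theorem countIn_le_countIn_of_mem_support_straighten (hΩ : IsLowerSet Ω)
    (hsc : D.IsStraighteningClosed Ω) {π ξ : P} (hπξ : ¬ π ≤ ξ) (hξπ : ¬ ξ ≤ π)
    {μ : {l : List P // l.Pairwise (· ≤ ·)}}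
    (hμ : μ ∈ (D.basis.repr (D.emb π * D.emb ξ)).support) :
    countIn Ω [π, ξ] ≤ countIn Ω μ.1 := by
  obtain ⟨ζ, hζμ, hζπ, hζξ⟩ := D.straighten π ξ hπξ hξπ μ hμ
  by_cases hπ : π ∈ Ω <;> by_cases hξ : ξ ∈ Ω
  · simpa [hπ, hξ] using hsc π hπ ξ hξ hπξ hξπ μ hμ
  · simpa [hπ, hξ] using Nat.succ_le_of_lt <| countIn_pos hζμ (hΩ hζπ hπ)
  · simpa [hπ, hξ] using Nat.succ_le_of_lt <| countIn_pos hζμ (hΩ hζξ hξ)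
  · simp [hπ, hξ]

theorem mulMemStdFiltration [WellFoundedLT P] (hΩ : IsLowerSet Ω)
    (hsc : D.IsStraighteningClosed Ω) (u : ℕ) (π : P) : D.MulMemStdFiltration Ω u π := by
  induction u using Nat.strong_induction_on generalizing π with
  | _ u ihu =>
  induction π using WellFoundedLT.induction with
  | _ π ihπ =>
  rintro (_ | ⟨ξ, t⟩) hs hc
  · simpa using monomial_mem_stdFiltration (D := D) (List.pairwise_singleton _ π) hc
  obtain _ | u := u
  · exact mem_stdFiltration_zero _
  have hQ : ∀ v ≤ u, ∀ π, D.MulMemStdFiltration Ω v π := fun v hv π => ihu v (by omega) π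
  have hmem : π ∈ Ω ∨ ξ ∈ Ω := by
    by_contra! h
    have := countIn_eq_zero_of_head_notMem hΩ hs h.2
    simp [h.1, this] at hc
  by_cases hπξ : π ≤ ξ
  · rw [← monomial_cons]
    exact monomial_mem_stdFiltration (List.pairwise_cons_of_le_head hs hπξ) hc
  by_cases hξπ : ξ ≤ π
  · have hξ : ξ ∈ Ω := hmem.elim (hΩ hξπ) id
    rw [monomial_cons, mul_left_comm]
    refine (ihπ ξ (lt_of_le_not_ge hξπ hπξ)).emb_mul_mem (w := u) (by simp [hξ]) ?_
    refine hQ u le_rfl π t hs.of_cons ?_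
    rw [countIn_cons Ω π, countIn_cons_of_mem hξ] at hc
    rw [countIn_cons]
    omega
  · rw [monomial_cons, ← mul_assoc]
    refine D.basis.mul_mem_of_forall_mem_support fun μ hμ => ?_
    obtain ⟨ζ, hζμ, hζπ, hζξ⟩ := D.straighten π ξ hπξ hξπ μ hμ
    obtain ⟨h, tail, hμeq, hhζ⟩ := List.exists_eq_cons_head_le μ.2 hζμ
    have hh : h ∈ Ω := hΩ hhζ (hmem.elim (hΩ hζπ) (hΩ hζξ))
    have hlt : h < π := lt_of_le_of_ne (hhζ.trans hζπ) fun e => hπξ (e ▸ hhζ.trans hζξ)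
    have hcount := countIn_le_countIn_of_mem_support_straighten hΩ hsc hπξ hξπ hμ
    rw [basis_eq_monomial, hμeq, monomial_cons, mul_assoc, ← monomial_append]
    refine (ihπ h hlt).emb_mul_mem (w := u) (by simp [hh])
      (monomial_mem_stdFiltration_of_forall hQ _ ?_)
    have : countIn Ω (π :: ξ :: t) = countIn Ω [π, ξ] + countIn Ω t := countIn_append Ω [π, ξ] t
    rw [hμeq, countIn_cons_of_mem hh] at hcount
    rw [countIn_append]
    omega

theorem mul_mem_stdFiltration [WellFoundedLT P] (hΩ : IsLowerSet Ω)
    (hsc : D.IsStraighteningClosed Ω) (a : A) {u : ℕ} {z : A} (hz : z ∈ D.stdFiltration Ω u) :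
    a * z ∈ D.stdFiltration Ω u := by
  refine D.basis.mul_mem_of_forall_mem_support fun μ _ => ?_
  rw [basis_eq_monomial]
  induction μ.1 with
  | nil => simpa using hz
  | cons x m ih =>
    rw [monomial_cons, mul_assoc]
    exact (mulMemStdFiltration hΩ hsc u x).emb_mul_mem (by omega) ih

theorem mem_stdFiltration_of_mem_span_pow [WellFoundedLT P] (hΩ : IsLowerSet Ω)
    (hsc : D.IsStraighteningClosed Ω) {u : ℕ} {z : A}
    (hz : z ∈ Ideal.span (D.emb '' Ω) ^ u) : z ∈ D.stdFiltration Ω u := by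
  induction u generalizing z with
  | zero => exact mem_stdFiltration_zero z
  | succ u ih =>
    rw [pow_succ'] at hz
    refine Submodule.mul_induction_on hz (fun y hy x hx => ?_) fun _ _ => add_mem
    induction hy using Submodule.span_induction with
    | mem _ hy =>
      obtain ⟨ω, hω, rfl⟩ := hy
      exact (mulMemStdFiltration hΩ hsc _ ω).emb_mul_mem (by simp [hω]) (ih hx)
    | zero => simp
    | add _ _ _ _ h₁ h₂ => rw [add_mul]; exact add_mem h₁ h₂
    | smul a _ _ h => rw [smul_eq_mul, mul_assoc]; exact mul_mem_stdFiltration hΩ hsc a h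

end ASLData

/-- For a straightening-closed poset ideal `Ω` of `P` with `I = AΩ`, an element `z ∈ A`
lies in `I^u` iff every standard monomial in the standard representation of `z` has at
least `u` factors in `Ω`. -/
theorem stmt_12 {P B A : Type*} [PartialOrder P] [Fintype P] [CommRing B] [CommRing A]
    [Algebra B A] (D : ASLData P B A) (Ω : Set P)
    -- Ω is a poset ideal
    (hideal : ∀ x ∈ Ω, ∀ y, y ≤ x → y ∈ Ω)
    -- Ω is straightening-closed
    (hsc : ∀ δ ∈ Ω, ∀ τ ∈ Ω, ¬ δ ≤ τ → ¬ τ ≤ δ →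
      ∀ μ ∈ (D.basis.repr (D.emb δ * D.emb τ)).support, 2 ≤ countIn Ω μ.1)
    (u : ℕ) (z : A) :
    z ∈ (Ideal.span (D.emb '' Ω)) ^ u ↔
      ∀ μ ∈ (D.basis.repr z).support, u ≤ countIn Ω μ.1 := by
  have hΩ : IsLowerSet Ω := fun _ _ hle ha => hideal _ ha _ hle
  rw [← ASLData.mem_stdFiltration_iff]
  exact ⟨ASLData.mem_stdFiltration_of_mem_span_pow hΩ hsc,
    ASLData.mem_span_pow_of_mem_stdFiltration⟩
end

section
/- Let γ = [a_1,...,a_d] with 1 ≤ a_1 < ... < a_d ≤ n, and let Γ(γ) = {δ : δ ≥ γ} be the set of strictly increasing d-tuples in {1,...,n} componentwise at least γ. The elements covering γ in Γ(γ) (equivalently, in the full lattice Γ) are exactly the tuples ζ_i obtained from γ by increasing by 1 the last entry of the i-th maximal block β_i of consecutive integers, for those blocks whose last entry can be increased (i.e., for 0 ≤ i ≤ t, where t = s if a_d < n and t = s-1 if a_d = n). -/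
/-!
The covering relation of `Γ` is that of the product order on `ℕ^d`, i.e. raising a single entry
by one. The nontrivial half is that whenever `γ < δ` in `Γ`, some tuple `ζ ∈ Γ` obtained from `γ`
by raising one entry by one satisfies `ζ ≤ δ`: raise the last entry `j` where `γ` and `δ` differ.
If the next entry of `γ` were `γ_j + 1`, it would be strictly below the corresponding entry of
`δ`, contradicting the choice of `j`; so `j` ends a block and `ζ` is still strictly increasing.
Conversely, for `δ = ζ_j ∈ Γ` the conditions `γ_j < n` and `γ_j + 1 < γ_{j+1}` just say that
`δ` lies in `Γ`.
-/

/-- The set of strictly increasing `d`-tuples with entries in `{1,...,n}`,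
ordered componentwise (as a subtype of `Fin d → ℕ`). -/
abbrev GammaSet (n d : ℕ) := {a : Fin d → ℕ // StrictMono a ∧ ∀ i, 1 ≤ a i ∧ a i ≤ n}

open Function

theorem StrictMono.exists_update_add_one_le {ι : Type*} [LinearOrder ι] [Finite ι]
    {f g : ι → ℕ} (hf : StrictMono f) (hg : StrictMono g) (hfg : f < g) :
    ∃ j, StrictMono (update f j (f j + 1)) ∧ update f j (f j + 1) ≤ g := by
  classical
  obtain ⟨hle, i, hi⟩ := Pi.lt_def.mp hfg
  have : Fintype ι := Fintype.ofFinite ι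
  obtain ⟨j, hj, hlast⟩ :=
    (Finset.univ.filter fun k => f k < g k).exists_max_image id ⟨i, by simpa using hi⟩
  simp only [Finset.mem_filter, Finset.mem_univ, true_and, id] at hj hlast
  have hblock : ∀ k, j < k → f j + 1 < f k := fun k hjk => by
    by_contra! hk
    have : f k < g k := by have := hf hjk; have := hg hjk; omega
    exact (hlast k this).not_gt hjk
  refine ⟨j, fun a b hab => ?_, update_le_iff.mpr ⟨hj, fun k _ => hle k⟩⟩
  rcases eq_or_ne a j with rfl | ha
  · simpa [hab.ne'] using hblock b hab
  rcases eq_or_ne b j with rfl | hb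
  · simpa [ha] using Nat.lt_succ_of_lt (hf hab)
  · simpa [ha, hb] using hf hab

namespace GammaSet

theorem covBy_iff_val_covBy {n d : ℕ} {γ δ : GammaSet n d} : γ ⋖ δ ↔ γ.1 ⋖ δ.1 := by
  refine ⟨fun h => ?_, fun h => CovBy.of_image (OrderEmbedding.subtype _) h⟩
  obtain ⟨j, hmono, hle⟩ := γ.2.1.exists_update_add_one_le δ.2.1 h.1
  have hcov : γ.1 ⋖ update γ.1 j (γ.1 j + 1) :=
    Pi.covBy_iff.mpr ⟨j, by simp, fun i hi => by simp [hi]⟩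
  let ζ : GammaSet n d := ⟨_, hmono, fun i =>
    ⟨(γ.2.2 i).1.trans (hcov.1.le i), (hle i).trans (δ.2.2 i).2⟩⟩
  have : ζ = δ := eq_of_le_of_not_lt hle (h.2 (show γ.1 < ζ.1 from hcov.1))
  rwa [← this]

end GammaSet

theorem stmt_14_general (n d : ℕ)
    (γ δ : GammaSet n d) :
    γ ⋖ δ ↔ ∃ j : Fin d, δ.1 j = γ.1 j + 1 ∧ (∀ i, i ≠ j → δ.1 i = γ.1 i) ∧
      γ.1 j < n ∧
      ((j : ℕ) = d - 1 ∨ ∀ (h : (j : ℕ) + 1 < d), γ.1 j + 1 < γ.1 ⟨(j : ℕ) + 1, h⟩) := by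
  simp only [GammaSet.covBy_iff_val_covBy, Pi.covBy_iff, Nat.covBy_iff_add_one_eq]
  constructor
  · rintro ⟨j, hj, heq⟩
    refine ⟨j, hj.symm, fun i hi => (heq i hi).symm, by have := (δ.2.2 j).2; omega, Or.inr fun h => ?_⟩
    have hnext : j < ⟨j + 1, h⟩ := Fin.lt_def.mpr (Nat.lt_succ_self _)
    calc γ.1 j + 1 = δ.1 j := hj
      _ < δ.1 ⟨j + 1, h⟩ := δ.2.1 hnext
      _ = γ.1 ⟨j + 1, h⟩ := (heq _ hnext.ne').symm
  · rintro ⟨j, hj, heq, -, -⟩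
    exact ⟨j, hj.symm, fun i hi => (heq i hi).symm⟩

/-- `δ` covers `γ` in `Γ` (equivalently in `Γ(γ) = {δ : δ ≥ γ}`) iff `δ` is obtained from
`γ` by increasing by 1 the last entry of a maximal block of consecutive integers of `γ`
whose last entry is less than `n` (so that it can be increased). 0-based indexing:
index `j` is the last entry of its block iff `j = d-1` or `γ_{j+1} > γ_j + 1`. -/
theorem stmt_14 (n d : ℕ) (hd : 1 ≤ d) (hdn : d ≤ n)
    (γ δ : GammaSet n d) :
    γ ⋖ δ ↔ ∃ j : Fin d, δ.1 j = γ.1 j + 1 ∧ (∀ i, i ≠ j → δ.1 i = γ.1 i) ∧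
      γ.1 j < n ∧
      ((j : ℕ) = d - 1 ∨ ∀ (h : (j : ℕ) + 1 < d), γ.1 j + 1 < γ.1 ⟨(j : ℕ) + 1, h⟩) :=
  stmt_14_general n d γ δ
end

section
/- Let P(Γ(γ)) = ξ_1, ..., ξ_m be the principal chain of the distributive lattice Γ(γ) = {δ ≥ γ} (where ξ_1 = γ and ξ_{i+1} is the join of all covers of ξ_i, terminating at the maximum [n-d+1,...,n]). Then the twisted sequence ξ̃_1, ξ̃_2, ..., ξ̃_m coincides with the chain obtained by iterating the step function (decreasing by 1 each entry that is the first of a maximal consecutive block and can be decreased) starting from γ̃ and ending at [1,2,...,d]. In particular m = τ(γ̃). -/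
/-- The twist operation `ã_i = n - a_{d-i+1} + 1`. -/
def twist (n d : ℕ) (a : Fin d → ℕ) : Fin d → ℕ := fun i => n + 1 - a i.rev

open Function

theorem StrictMono.apply_add_sub_le {d : ℕ} {f : Fin d → ℕ} (hf : StrictMono f) {i j : Fin d}
    (hij : i ≤ j) : f i + (j - i : ℕ) ≤ f j := by
  have hcard := Finset.card_le_card_of_injOn f (s := Finset.Icc i j) (t := Finset.Icc (f i) (f j))
    (fun k hk => by
      simp only [Finset.coe_Icc, Set.mem_Icc] at hk ⊢
      exact ⟨hf.monotone hk.1, hf.monotone hk.2⟩)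
    hf.injective.injOn
  rw [Fin.card_Icc, Nat.card_Icc] at hcard
  have := hf.monotone hij
  omega

namespace GammaSet

variable {n d : ℕ}

theorem dim_le (x : GammaSet n d) : d ≤ n := by
  simpa using Finset.card_le_card_of_injOn x.1 (s := Finset.univ) (t := Finset.Icc 1 n)
    (fun i _ => by simpa using x.2.2 i) x.2.1.injective.injOn

def top (h : d ≤ n) : GammaSet n d :=
  ⟨fun i => n - d + 1 + i, fun i j hij => by simpa using Fin.lt_def.1 hij,
    fun i => ⟨by dsimp only; omega, by have := i.2; dsimp only; omega⟩⟩

theorem le_top (x : GammaSet n d) : x ≤ top x.dim_le := fun i => by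
  have := i.2
  have hlast := x.2.1.apply_add_sub_le (i := i) (j := ⟨d - 1, by omega⟩)
    (Fin.mk_le_mk.2 (by omega))
  have := (x.2.2 ⟨d - 1, by omega⟩).2
  show x.1 i ≤ n - d + 1 + i
  simp only at hlast
  omega

def CanRaise (n : ℕ) (a : Fin d → ℕ) (j : Fin d) : Prop :=
  if h : (j : ℕ) + 1 < d then a j + 1 < a ⟨j + 1, h⟩ else a j < n

instance (a : Fin d → ℕ) (j : Fin d) : Decidable (CanRaise n a j) := by
  unfold CanRaise; infer_instance

variable {x : GammaSet n d} {j : Fin d}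

theorem CanRaise.add_one_lt (h : CanRaise n x.1 j) {k : Fin d} (hjk : j < k) :
    x.1 j + 1 < x.1 k := by
  have hnext : (j : ℕ) + 1 < d := by omega
  rw [CanRaise, dif_pos hnext] at h
  have := x.2.1.monotone (show (⟨j + 1, hnext⟩ : Fin d) ≤ k from Fin.mk_le_of_le_val hjk)
  omega

theorem CanRaise.lt (h : CanRaise n x.1 j) : x.1 j < n := by
  by_cases hnext : (j : ℕ) + 1 < d
  · have := h.add_one_lt (k := ⟨j + 1, hnext⟩) (Fin.lt_def.2 (Nat.lt_succ_self _))
    have := (x.2.2 ⟨j + 1, hnext⟩).2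
    omega
  · rwa [CanRaise, dif_neg hnext] at h

def raise (x : GammaSet n d) (j : Fin d) (h : CanRaise n x.1 j) : GammaSet n d :=
  ⟨update x.1 j (x.1 j + 1), by
    refine ⟨fun i k hik => ?_, fun i => ?_⟩
    · rcases eq_or_ne i j with rfl | hi
      · have := h.add_one_lt hik
        simp_all [update_of_ne hik.ne']
      · have := x.2.1 hik
        rcases eq_or_ne k j with rfl | hk <;> simp_all [le_of_lt]
    · have := x.2.2 i
      have := h.lt
      rcases eq_or_ne i j with rfl | hi <;> simp_all⟩

theorem covBy_raise (h : CanRaise n x.1 j) : x ⋖ raise x j h :=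
  CovBy.of_image (OrderEmbedding.subtype _) <|
    Pi.covBy_iff_exists_right_eq.2 ⟨j, _, Order.covBy_add_one _, rfl⟩

theorem exists_raise_le_of_lt {x y : GammaSet n d} (hxy : x < y) :
    ∃ j, ∃ h : CanRaise n x.1 j, raise x j h ≤ y := by
  have hle : ∀ i, x.1 i ≤ y.1 i := hxy.le
  have hne : (Finset.univ.filter fun i => x.1 i < y.1 i).Nonempty := by
    by_contra! hempty
    refine hxy.ne (Subtype.ext (funext fun i => le_antisymm (hle i) ?_))
    simpa using Finset.filter_eq_empty_iff.1 hempty (Finset.mem_univ i)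
  -- the last entry where `x` and `y` differ can be raised
  obtain ⟨j, hj, hmax⟩ := Finset.exists_max_image _ id hne
  simp only [Finset.mem_filter, Finset.mem_univ, true_and, id] at hj hmax
  have hcan : CanRaise n x.1 j := by
    unfold CanRaise
    split_ifs with hnext
    · have hy := y.2.1 (show j < ⟨j + 1, hnext⟩ from Fin.lt_def.2 (Nat.lt_succ_self _))
      have := hle ⟨j + 1, hnext⟩
      have := mt (hmax ⟨j + 1, hnext⟩) (by simp [Fin.le_def])
      omega
    · have := (y.2.2 j).2
      omega
  refine ⟨j, hcan, fun i => ?_⟩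
  rcases eq_or_ne i j with rfl | hi
  · simpa [raise] using hj
  · simpa [raise, hi] using hle i

theorem exists_canRaise_of_ne_top (x : GammaSet n d)
    (hx : x.1 ≠ fun i : Fin d => n - d + 1 + (i : ℕ)) : ∃ j, CanRaise n x.1 j := by
  have hlt : x < top x.dim_le := x.le_top.lt_of_ne fun h => hx (congrArg Subtype.val h)
  obtain ⟨j, h, -⟩ := exists_raise_le_of_lt hlt
  exact ⟨j, h⟩

def raiseAll (x : GammaSet n d) : GammaSet n d :=
  ⟨fun j => if CanRaise n x.1 j then x.1 j + 1 else x.1 j, by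
    refine ⟨fun i k hik => ?_, fun i => ?_⟩
    · have := x.2.1 hik
      dsimp only
      split_ifs with hi hk hk
      · omega
      · exact CanRaise.add_one_lt hi hik
      · omega
      · exact this
    · have := x.2.2 i
      dsimp only
      split_ifs with hi
      · have := CanRaise.lt hi; omega
      · exact this⟩

theorem raise_le_raiseAll (h : CanRaise n x.1 j) : raise x j h ≤ raiseAll x := fun i => by
  rcases eq_or_ne i j with rfl | hi
  · simp [raise, raiseAll, h]
  · simp only [raise, raiseAll, update_of_ne hi]
    split_ifs <;> omega

theorem isLUB_raiseAll (x : GammaSet n d) (hx : ∃ j, CanRaise n x.1 j) :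
    IsLUB {c | x ⋖ c} (raiseAll x) := by
  refine ⟨fun c hc => ?_, fun u hu i => ?_⟩
  · obtain ⟨j, h, hjc⟩ := exists_raise_le_of_lt (CovBy.lt hc)
    have hcj : raise x j h = c :=
      ((CovBy.eq_or_eq hc (covBy_raise h).le hjc).resolve_left (covBy_raise h).lt.ne')
    exact hcj ▸ raise_le_raiseAll h
  · show (if CanRaise n x.1 i then x.1 i + 1 else x.1 i) ≤ u.1 i
    split_ifs with hi
    · simpa [raise] using hu (covBy_raise hi) i
    · obtain ⟨j, hj⟩ := hx
      exact (covBy_raise hj).le.trans (hu (covBy_raise hj)) i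

-- The twist turns the right neighbour of entry `i.rev` into the left neighbour of entry `i`.
theorem canRaise_rev_iff {a : Fin d → ℕ} (ha : ∀ i, a i ≤ n) (i : Fin d) :
    CanRaise n a i.rev ↔ ((i : ℕ) = 0 ∧ 1 < twist n d a i) ∨
      (0 < (i : ℕ) ∧ twist n d a ⟨(i : ℕ) - 1, by omega⟩ + 1 < twist n d a i) := by
  have hrev : (i.rev : ℕ) = d - (i + 1) := Fin.val_rev i
  have := ha i.rev
  unfold CanRaise twist
  rcases Nat.eq_zero_or_pos (i : ℕ) with hi | hi
  · rw [dif_neg (by omega)]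
    omega
  · have hprev : (⟨(i : ℕ) - 1, by omega⟩ : Fin d).rev = ⟨i.rev + 1, by omega⟩ :=
      Fin.ext (by simp only [Fin.val_rev]; omega)
    have := ha ⟨i.rev + 1, by omega⟩
    rw [dif_pos (by omega), hprev]
    omega

theorem twist_raiseAll (x : GammaSet n d) :
    twist n d (raiseAll x).1 = stepFn d (twist n d x.1) := by
  funext i
  have hstep := canRaise_rev_iff (fun i => (x.2.2 i).2) i
  have := (x.2.2 i.rev).2
  show n + 1 - (if CanRaise n x.1 i.rev then _ else _) = stepFn d (twist n d x.1) i
  by_cases hc : CanRaise n x.1 i.rev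
  · rw [if_pos hc, stepFn, if_pos (hstep.1 hc), twist]
    omega
  · rw [if_neg hc, stepFn, if_neg (mt hstep.2 hc), twist]

theorem twist_eq_iff (x : GammaSet n d) :
    twist n d x.1 = (fun i : Fin d => (i : ℕ) + 1) ↔
      x.1 = fun i : Fin d => n - d + 1 + (i : ℕ) := by
  have := x.dim_le
  constructor
  · intro h
    funext i
    have hi := congrFun h i.rev
    have := (x.2.2 i).2
    simp only [twist, Fin.rev_rev, Fin.val_rev] at hi
    omega
  · intro h
    funext i
    simp only [twist, h, Fin.val_rev]
    omega

end GammaSet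

theorem stmt_16_general (n d : ℕ)
    (γ : GammaSet n d) (m : ℕ) (hm : 1 ≤ m)
    (ξ : ℕ → GammaSet n d)
    (hξ0 : ξ 0 = γ)
    (hξtop : (ξ (m - 1)).1 = fun i : Fin d => n - d + 1 + (i : ℕ))
    (hξmid : ∀ i, i + 1 < m → (ξ i).1 ≠ fun j : Fin d => n - d + 1 + (j : ℕ))
    (hξstep : ∀ i, i + 1 < m → IsLUB {δ : GammaSet n d | ξ i ⋖ δ} (ξ (i + 1))) :
    (∀ i < m, twist n d (ξ i).1 = (stepFn d)^[i] (twist n d γ.1)) ∧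
      (stepFn d)^[m - 1] (twist n d γ.1) = (fun i : Fin d => (i : ℕ) + 1) ∧
      (∀ l, (stepFn d)^[l] (twist n d γ.1) = (fun i : Fin d => (i : ℕ) + 1) → m - 1 ≤ l) := by
  have hchain : ∀ i < m, twist n d (ξ i).1 = (stepFn d)^[i] (twist n d γ.1) := by
    intro i
    induction i with
    | zero => simp [hξ0]
    | succ i ih =>
      intro hi
      have hcan := GammaSet.exists_canRaise_of_ne_top _ (hξmid i hi)
      have hnext : ξ (i + 1) = GammaSet.raiseAll (ξ i) :=
        (hξstep i hi).unique (GammaSet.isLUB_raiseAll _ hcan)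
      rw [hnext, GammaSet.twist_raiseAll, ih (by omega), Function.iterate_succ_apply']
  refine ⟨hchain, ?_, fun l hl => ?_⟩
  · rw [← hchain (m - 1) (by omega), (GammaSet.twist_eq_iff _).2 hξtop]
  · by_contra! hlm
    exact hξmid l (by omega) ((GammaSet.twist_eq_iff _).1 (hl ▸ hchain l (by omega)))

/-- The twist of the principal chain `ξ_1, ..., ξ_m` of `Γ(γ)` (with `ξ_1 = γ`, each
`ξ_{i+1}` the join of all covers of `ξ_i`, and `ξ_m = [n-d+1,...,n]` the maximum) is the
chain obtained by iterating the step function starting from `γ̃` and ending at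
`[1,2,...,d]`; in particular `m = τ(γ̃)`, i.e. `m - 1` is the minimal number of
iterations of `step` taking `γ̃` to `[1,...,d]`. -/
theorem stmt_16 (n d : ℕ) (hd : 1 ≤ d) (hdn : d ≤ n)
    (γ : GammaSet n d) (m : ℕ) (hm : 1 ≤ m)
    (ξ : ℕ → GammaSet n d)
    (hξ0 : ξ 0 = γ)
    (hξtop : (ξ (m - 1)).1 = fun i : Fin d => n - d + 1 + (i : ℕ))
    (hξmid : ∀ i, i + 1 < m → (ξ i).1 ≠ fun j : Fin d => n - d + 1 + (j : ℕ))
    (hξstep : ∀ i, i + 1 < m → IsLUB {δ : GammaSet n d | ξ i ⋖ δ} (ξ (i + 1))) :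
    (∀ i < m, twist n d (ξ i).1 = (stepFn d)^[i] (twist n d γ.1)) ∧
      (stepFn d)^[m - 1] (twist n d γ.1) = (fun i : Fin d => (i : ℕ) + 1) ∧
      (∀ l, (stepFn d)^[l] (twist n d γ.1) = (fun i : Fin d => (i : ℕ) + 1) → m - 1 ≤ l) :=
  stmt_16_general n d γ m hm ξ hξ0 hξtop hξmid hξstep
end
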